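/- arXiv:2105.03981 — 3 statements merged into one kernel-verified Lean document; each statement's English description precedes it below -/
import Mathlib

section
/- Let N ≥ 2 and 2N/(N+1) < p < 2. Set λ = N(p−2)+p and α = N/(N(p−2)+p), and let C₀ > 0. Then the function F(y) = (C₀ + ((2−p)/p) λ^{−1/(p−1)} ∑ᵢ |yᵢ|^{p/(p−1)})^{−(p−1)/(2−p)} satisfies, for each i and at every point where yᵢ ≠ 0, the first-order relation |F_{yᵢ}|^{p−2} F_{yᵢ} + (α/N) yᵢ F = 0. -/
/-!
Along the `i`-th coordinate `F` is `t ↦ (A + c |t|^q)^β` with `q = p/(p-1)` the conjugate exponent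
and `β = -(p-1)/(2-p)`, and the constant `c = (2-p)/p · λ^(-1/(p-1))` is chosen so that the chain
rule gives `F_{yᵢ} = -λ^(-1/(p-1)) X^(β-1) |yᵢ|^(q-2) yᵢ`, `X` being the base of the power.
Raising to the power `p - 1` collapses every exponent: `(β-1)(p-1) = β`, `(q-1)(p-1) = 1` and
`λ^(-1/(p-1))` becomes `λ⁻¹ = α/N`, so `|F_{yᵢ}|^(p-2) F_{yᵢ} = -(α/N) yᵢ F`.
-/

/-- Partial derivative along the i-th coordinate direction. -/
noncomputable def pderiv' (N : ℕ) (i : Fin N) (u : (Fin N → ℝ) → ℝ) (y : Fin N → ℝ) : ℝ :=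
  deriv (fun t => u (Function.update y i t)) (y i)

open Real

theorem abs_rpow_mul_self_of_pos {a : ℝ} (ha : 0 < a) (r t : ℝ) :
    |a * t| ^ r * (a * t) = a ^ (r + 1) * (|t| ^ r * t) := by
  rw [abs_mul, abs_of_pos ha, mul_rpow ha.le (abs_nonneg t), rpow_add_one ha.ne']
  ring

theorem hasDerivAt_rpow_add_mul_abs_rpow {A c q β : ℝ} (hq : 1 < q) {t : ℝ}
    (hX : 0 < A + c * |t| ^ q) :
    HasDerivAt (fun s : ℝ => (A + c * |s| ^ q) ^ β)
      (β * c * q * (A + c * |t| ^ q) ^ (β - 1) * |t| ^ (q - 2) * t) t := by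
  convert (((hasDerivAt_abs_rpow t hq).const_mul c).const_add A).rpow_const
    (p := β) (Or.inl hX.ne') using 1
  ring

theorem pderiv'_eq_of_hasDerivAt {N : ℕ} {i : Fin N} {u : (Fin N → ℝ) → ℝ} {y : Fin N → ℝ}
    {g : ℝ → ℝ} {d : ℝ} (hg : ∀ t, u (Function.update y i t) = g t)
    (hd : HasDerivAt g d (y i)) : pderiv' N i u y = d := by
  rw [pderiv', funext hg, hd.deriv]

theorem sum_abs_rpow_update {ι : Type*} [Fintype ι] [DecidableEq ι] (y : ι → ℝ) (i : ι)
    (q t : ℝ) :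
    ∑ j, |Function.update y i t j| ^ q = |t| ^ q + ∑ j ∈ Finset.univ \ {i}, |y j| ^ q := by
  rw [← Finset.sum_update_of_mem (Finset.mem_univ i)]
  exact Finset.sum_congr rfl fun j _ => Function.apply_update (fun _ s => |s| ^ q) y i t j

theorem hasDerivAt_barenblatt_slice {p K A t : ℝ} (hp1 : 1 < p) (hp2 : p < 2)
    (hX : 0 < A + (2 - p) / p * K * |t| ^ (p / (p - 1))) :
    HasDerivAt (fun s : ℝ => (A + (2 - p) / p * K * |s| ^ (p / (p - 1))) ^ (-(p - 1) / (2 - p)))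
      (-(K * (A + (2 - p) / p * K * |t| ^ (p / (p - 1))) ^ (-1 / (2 - p))
        * |t| ^ ((2 - p) / (p - 1)) * t)) t := by
  have hq : 1 < p / (p - 1) := by rw [one_lt_div (by linarith)]; linarith
  convert hasDerivAt_rpow_add_mul_abs_rpow (β := -(p - 1) / (2 - p)) hq hX using 1
  have hp0 : p ≠ 0 := by linarith
  have hp1' : p - 1 ≠ 0 := by linarith
  have hp2' : 2 - p ≠ 0 := by linarith
  have hβ : -(p - 1) / (2 - p) - 1 = -1 / (2 - p) := by field_simp; ring
  have hq2 : p / (p - 1) - 2 = (2 - p) / (p - 1) := by field_simp; ring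
  have hcoeff : -(p - 1) / (2 - p) * ((2 - p) / p * K) * (p / (p - 1)) = -K := by
    field_simp
  rw [hβ, hq2, hcoeff]
  ring

theorem barenblatt_flux {p lam X t : ℝ} (hp1 : 1 < p) (hp2 : p < 2) (hlam : 0 < lam)
    (hX : 0 < X) (ht : t ≠ 0) :
    |lam ^ (-1 / (p - 1)) * X ^ (-1 / (2 - p)) * |t| ^ ((2 - p) / (p - 1)) * t| ^ (p - 2)
        * (lam ^ (-1 / (p - 1)) * X ^ (-1 / (2 - p)) * |t| ^ ((2 - p) / (p - 1)) * t)
      = lam⁻¹ * X ^ (-(p - 1) / (2 - p)) * t := by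
  have ht' : 0 < |t| := abs_pos.mpr ht
  have hp1' : p - 1 ≠ 0 := by linarith
  have hp2' : 2 - p ≠ 0 := by linarith
  have hpow : (lam ^ (-1 / (p - 1)) * X ^ (-1 / (2 - p)) * |t| ^ ((2 - p) / (p - 1))) ^ (p - 1)
      = lam⁻¹ * X ^ (-(p - 1) / (2 - p)) * |t| ^ (2 - p) := by
    rw [mul_rpow (by positivity) (by positivity), mul_rpow (by positivity) (by positivity),
      ← rpow_mul hlam.le, ← rpow_mul hX.le, ← rpow_mul ht'.le, ← rpow_neg_one]
    congr 3 <;> field_simp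
  have hcancel : |t| ^ (2 - p) * |t| ^ (p - 2) = 1 := by
    rw [← rpow_add ht', show 2 - p + (p - 2) = 0 by ring, rpow_zero]
  rw [abs_rpow_mul_self_of_pos (by positivity), show p - 2 + 1 = p - 1 by ring, hpow]
  linear_combination lam⁻¹ * X ^ (-(p - 1) / (2 - p)) * t * hcancel

theorem stmt3_general (N : ℕ) (p lam α C₀ : ℝ)
    (hpc : 2 * N / ((N : ℝ) + 1) < p) (hp2 : p < 2)
    (hlam : lam = N * (p - 2) + p) (hα : α = (N : ℝ) / ((N : ℝ) * (p - 2) + p)) (hC : 0 < C₀)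
    (F : (Fin N → ℝ) → ℝ)
    (hF : F = fun y =>
      (C₀ + (2 - p) / p * lam ^ (-(1 : ℝ) / (p - 1)) * ∑ i, |y i| ^ (p / (p - 1)))
        ^ (-(p - 1) / (2 - p))) :
    ∀ (y : Fin N → ℝ) (i : Fin N), y i ≠ 0 →
      |pderiv' N i F y| ^ (p - 2) * pderiv' N i F y + (α / N) * y i * F y = 0 := by
  intro y i hyi
  have hN1 : (1 : ℝ) ≤ N := by exact_mod_cast i.pos
  have hN1p : (0 : ℝ) < N + 1 := by linarith
  rw [div_lt_iff₀ hN1p] at hpc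
  have hp1 : 1 < p := by nlinarith
  have hlam0 : 0 < lam := by rw [hlam]; linarith
  set c := (2 - p) / p * lam ^ (-(1 : ℝ) / (p - 1))
  set q := p / (p - 1)
  set A := C₀ + c * ∑ j ∈ Finset.univ \ {i}, |y j| ^ q
  have hc : 0 ≤ c := by positivity
  have hslice : ∀ t, F (Function.update y i t) = (A + c * |t| ^ q) ^ (-(p - 1) / (2 - p)) := by
    intro t
    simp only [hF, sum_abs_rpow_update, A]
    congr 1
    ring
  have hX : 0 < A + c * |y i| ^ q := by positivity
  have hFy : F y = (A + c * |y i| ^ q) ^ (-(p - 1) / (2 - p)) := by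
    simpa using hslice (y i)
  have hαN : α / N = lam⁻¹ := by
    rw [hα, ← hlam]
    field_simp
  rw [pderiv'_eq_of_hasDerivAt hslice (hasDerivAt_barenblatt_slice hp1 hp2 hX), abs_neg,
    mul_neg, barenblatt_flux hp1 hp2 hlam0 hX hyi, hFy, hαN]
  ring

/-- The explicit orthotropic Barenblatt profile satisfies the first-order relation
    |F_{yᵢ}|^{p-2} F_{yᵢ} + (α/N) yᵢ F = 0 away from the coordinate hyperplanes. -/
theorem stmt3 (N : ℕ) (hN : 2 ≤ N) (p lam α C₀ : ℝ)
    (hpc : 2 * N / ((N : ℝ) + 1) < p) (hp2 : p < 2)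
    (hlam : lam = N * (p - 2) + p) (hα : α = (N : ℝ) / ((N : ℝ) * (p - 2) + p)) (hC : 0 < C₀)
    (F : (Fin N → ℝ) → ℝ)
    (hF : F = fun y =>
      (C₀ + (2 - p) / p * lam ^ (-(1 : ℝ) / (p - 1)) * ∑ i, |y i| ^ (p / (p - 1)))
        ^ (-(p - 1) / (2 - p))) :
    ∀ (y : Fin N → ℝ) (i : Fin N), y i ≠ 0 →
      |pderiv' N i F y| ^ (p - 2) * pderiv' N i F y + (α / N) * y i * F y = 0 :=
  stmt3_general N p lam α C₀ hpc hp2 hlam hα hC F hF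
end

section
/- Let N ≥ 2, 1 < pᵢ < 2 for all i, with p̄ > 2N/(N+1), and let α, σᵢ be the self-similar exponents. Set m = minᵢ{σᵢ pᵢ/(2−pᵢ)} (so m > 1). If 0 < γᵢ ≤ [ (α/N)(m−1) · 1/(2(pᵢ−1)) · (pᵢ/(2−pᵢ))^{−pᵢ} ]^{1/(2−pᵢ)} for each i, then the function F̄(y) = (∑ᵢ γᵢ|yᵢ|^{pᵢ/(2−pᵢ)})^{−1} satisfies ∑ᵢ[(|F̄_{yᵢ}|^{pᵢ−2}F̄_{yᵢ})_{yᵢ} + ασᵢ(yᵢF̄)_{yᵢ}] ≤ 0 at every point y with all coordinates nonzero. -/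
open Finset Function

lemma abs_rpow_sub_two_mul_mul_self (a : ℝ) {t : ℝ} (ht : t ≠ 0) :
    |t| ^ (a - 2) * (t * t) = |t| ^ a := by
  rw [← abs_mul_abs_self, ← sq, ← Real.rpow_natCast,
    ← Real.rpow_add (abs_pos.2 ht)]
  norm_num

lemma hasDerivAt_abs_rpow_of_ne_zero (a : ℝ) {t : ℝ} (ht : t ≠ 0) :
    HasDerivAt (fun s : ℝ => |s| ^ a) (a * |t| ^ (a - 2) * t) t := by
  convert (hasDerivAt_abs ht).rpow_const (p := a) (Or.inl (abs_ne_zero.2 ht)) using 1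
  rw [show a - 1 = a - 2 + 1 by ring, Real.rpow_add_one (abs_ne_zero.2 ht)]
  linear_combination (a * |t| ^ (a - 2)) * (sign_mul_abs t).symm

lemma hasDerivAt_abs_rpow_mul_self (a : ℝ) {t : ℝ} (ht : t ≠ 0) :
    HasDerivAt (fun s : ℝ => |s| ^ a * s) ((a + 1) * |t| ^ a) t := by
  refine ((hasDerivAt_abs_rpow_of_ne_zero a ht).mul (hasDerivAt_id t)).congr_deriv ?_
  rw [id_eq, mul_one]
  linear_combination a * abs_rpow_sub_two_mul_mul_self a ht

lemma abs_rpow_sub_two_mul_self_mul_abs_rpow_mul (p : ℝ) {c k s : ℝ} (hc : 0 < c)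
    (hs : s ≠ 0) :
    |c * (|s| ^ k * s)| ^ (p - 2) * (c * (|s| ^ k * s))
      = c ^ (p - 1) * (|s| ^ ((k + 1) * (p - 1) - 1) * s) := by
  have hu : 0 < |s| := abs_pos.2 hs
  have habs : |c * (|s| ^ k * s)| = c * |s| ^ (k + 1) := by
    rw [abs_mul, abs_mul, abs_of_pos hc, abs_of_nonneg (Real.rpow_nonneg hu.le _),
      Real.rpow_add_one hu.ne']
  rw [habs, Real.mul_rpow hc.le (Real.rpow_nonneg hu.le _), ← Real.rpow_mul hu.le,
    show p - 1 = (p - 2) + 1 by ring, Real.rpow_add_one hc.ne',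
    show (k + 1) * ((p - 2) + 1) - 1 = (k + 1) * (p - 2) + k by ring, Real.rpow_add hu]
  ring

lemma mul_rpow_mul_rpow_le_div {p γ u S : ℝ} (hp1 : 1 < p) (hp2 : p < 2) (hγ : 0 < γ)
    (hu : 0 < u) (hS : γ * u ^ (p / (2 - p)) ≤ S) :
    (γ * (p / (2 - p))) ^ p * u ^ ((p / (2 - p) - 1) * p) * S ^ (-(2 * (p - 1)) - 1)
      ≤ (p / (2 - p)) ^ p * γ ^ (2 - p) / S := by
  set q := p / (2 - p) with hq
  have hq0 : 0 < q := div_pos (by linarith) (by linarith)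
  have hw : 0 < γ * u ^ q := mul_pos hγ (Real.rpow_pos_of_pos hu q)
  have hS0 : 0 < S := hw.trans_le hS
  have hexp : (q - 1) * p = q * (2 * (p - 1)) := by
    rw [hq]
    field_simp [show 2 - p ≠ 0 by linarith]
    ring
  have key : (γ * q) ^ p * u ^ ((q - 1) * p)
      = q ^ p * γ ^ (2 - p) * (γ * u ^ q) ^ (2 * (p - 1)) := by
    rw [Real.mul_rpow hγ.le hq0.le, Real.mul_rpow hγ.le (Real.rpow_nonneg hu.le _),
      ← Real.rpow_mul hu.le, hexp, mul_assoc, mul_assoc, ← mul_assoc (γ ^ (2 - p)),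
      ← Real.rpow_add hγ, show 2 - p + 2 * (p - 1) = p by ring]
    ring
  have hpow : (γ * u ^ q) ^ (2 * (p - 1)) ≤ S ^ (2 * (p - 1)) :=
    Real.rpow_le_rpow hw.le hS (by linarith)
  rw [key, Real.rpow_sub hS0, Real.rpow_one, Real.rpow_neg hS0.le]
  calc q ^ p * γ ^ (2 - p) * (γ * u ^ q) ^ (2 * (p - 1)) * ((S ^ (2 * (p - 1)))⁻¹ / S)
      = q ^ p * γ ^ (2 - p) * ((γ * u ^ q) ^ (2 * (p - 1)) / S ^ (2 * (p - 1))) / S := by ring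
    _ ≤ q ^ p * γ ^ (2 - p) * 1 / S := by
      gcongr
      exact div_le_one_of_le₀ hpow (by positivity)
    _ = _ := by ring

noncomputable def barrierProfile (A γ q t : ℝ) : ℝ := (A + γ * |t| ^ q)⁻¹

section barrierProfile

variable {A γ q t : ℝ}

lemma barrierProfile_denom_pos (hA : 0 ≤ A) (hγ : 0 < γ) (ht : t ≠ 0) :
    0 < A + γ * |t| ^ q :=
  add_pos_of_nonneg_of_pos hA (mul_pos hγ (Real.rpow_pos_of_pos (abs_pos.2 ht) q))

lemma hasDerivAt_barrierProfile (hA : 0 ≤ A) (hγ : 0 < γ) (ht : t ≠ 0) :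
    HasDerivAt (barrierProfile A γ q)
      (-(γ * q * (A + γ * |t| ^ q) ^ (-2 : ℝ) * (|t| ^ (q - 2) * t))) t := by
  refine ((((hasDerivAt_abs_rpow_of_ne_zero q ht).const_mul γ).const_add A).inv
    (barrierProfile_denom_pos hA hγ ht).ne').congr_deriv ?_
  rw [Real.rpow_neg (barrierProfile_denom_pos hA hγ ht).le, Real.rpow_two]
  ring

lemma barrierProfile_flux_eq (p : ℝ) (hq : 0 < q) (hA : 0 ≤ A) (hγ : 0 < γ) (ht : t ≠ 0) :
    |deriv (barrierProfile A γ q) t| ^ (p - 2) * deriv (barrierProfile A γ q) t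
      = -((γ * q) ^ (p - 1) * ((A + γ * |t| ^ q) ^ (-(2 * (p - 1)))
          * (|t| ^ ((q - 1) * (p - 1) - 1) * t))) := by
  have hS := barrierProfile_denom_pos (q := q) hA hγ ht
  rw [(hasDerivAt_barrierProfile hA hγ ht).deriv, abs_neg, mul_neg,
    abs_rpow_sub_two_mul_self_mul_abs_rpow_mul p (by positivity) ht,
    Real.mul_rpow (by positivity) (by positivity), ← Real.rpow_mul hS.le,
    show q - 2 + 1 = q - 1 by ring, neg_mul]
  ring

lemma exists_hasDerivAt_barrierProfile_flux_le {p : ℝ} (hp1 : 1 < p) (hp2 : p < 2)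
    (hA : 0 ≤ A) (hγ : 0 < γ) (ht : t ≠ 0) :
    ∃ D, HasDerivAt (fun s => |deriv (barrierProfile A γ (p / (2 - p))) s| ^ (p - 2)
        * deriv (barrierProfile A γ (p / (2 - p))) s) D t
      ∧ D ≤ 2 * (p - 1) * (p / (2 - p)) ^ p * γ ^ (2 - p) / (A + γ * |t| ^ (p / (2 - p))) := by
  set q := p / (2 - p) with hq
  have hq0 : 0 < q := div_pos (by linarith) (by linarith)
  have hS := barrierProfile_denom_pos (q := q) hA hγ ht
  have hflux : (fun s => |deriv (barrierProfile A γ q) s| ^ (p - 2)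
        * deriv (barrierProfile A γ q) s) =ᶠ[nhds t] fun s => -((γ * q) ^ (p - 1)
          * ((A + γ * |s| ^ q) ^ (-(2 * (p - 1))) * (|s| ^ ((q - 1) * (p - 1) - 1) * s))) := by
    filter_upwards [eventually_ne_nhds ht] with s hs
    exact barrierProfile_flux_eq p hq0 hA hγ hs
  have hD := (((((hasDerivAt_abs_rpow_of_ne_zero q ht).const_mul γ).const_add A).rpow_const
    (p := -(2 * (p - 1))) (Or.inl hS.ne')).mul
    (hasDerivAt_abs_rpow_mul_self ((q - 1) * (p - 1) - 1) ht)).const_mul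
    ((γ * q) ^ (p - 1)) |>.neg
  refine ⟨_, hD.congr_of_eventuallyEq hflux, ?_⟩
  have hu : 0 < |t| := abs_pos.2 ht
  have hpow : (γ * q) ^ (p - 1) * (γ * q) = (γ * q) ^ p := by
    rw [← Real.rpow_add_one (by positivity), sub_add_cancel]
  have hmon :
      |t| ^ (q - 2) * (t * t) * |t| ^ ((q - 1) * (p - 1) - 1) = |t| ^ ((q - 1) * p) := by
    rw [abs_rpow_sub_two_mul_mul_self q ht, ← Real.rpow_add hu]
    congr 1
    ring
  have hdiffusion : 0 ≤ (γ * q) ^ (p - 1) * ((A + γ * |t| ^ q) ^ (-(2 * (p - 1)))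
      * (((q - 1) * (p - 1) - 1 + 1) * |t| ^ ((q - 1) * (p - 1) - 1))) := by
    have hq1 : 1 < q := by rw [hq, lt_div_iff₀ (by linarith)]; linarith
    have : 0 ≤ (q - 1) * (p - 1) - 1 + 1 := by nlinarith
    positivity
  calc _ = 2 * (p - 1) * ((γ * q) ^ p * |t| ^ ((q - 1) * p)
        * (A + γ * |t| ^ q) ^ (-(2 * (p - 1)) - 1))
        - (γ * q) ^ (p - 1) * ((A + γ * |t| ^ q) ^ (-(2 * (p - 1)))
          * (((q - 1) * (p - 1) - 1 + 1) * |t| ^ ((q - 1) * (p - 1) - 1))) := by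
        rw [← hpow, ← hmon]; ring
    _ ≤ 2 * (p - 1) * (q ^ p * γ ^ (2 - p) / (A + γ * |t| ^ q)) - 0 := by
        gcongr
        exact mul_rpow_mul_rpow_le_div hp1 hp2 hγ hu (le_add_of_nonneg_left hA)
    _ = _ := by ring

lemma hasDerivAt_mul_barrierProfile (hA : 0 ≤ A) (hγ : 0 < γ) (ht : t ≠ 0) :
    HasDerivAt (fun s => s * barrierProfile A γ q s)
      (1 / (A + γ * |t| ^ q) - q * (γ * |t| ^ q) / (A + γ * |t| ^ q) ^ 2) t := by
  refine ((hasDerivAt_id t).mul (hasDerivAt_barrierProfile hA hγ ht)).congr_deriv ?_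
  have hmon : t * (|t| ^ (q - 2) * t) = |t| ^ q := by
    rw [mul_comm, mul_assoc, abs_rpow_sub_two_mul_mul_self q ht]
  rw [Real.rpow_neg (barrierProfile_denom_pos hA hγ ht).le, Real.rpow_two, id_eq, barrierProfile]
  linear_combination (-(γ * q) * ((A + γ * |t| ^ q) ^ 2)⁻¹) * hmon

lemma deriv_barrierProfile_operator_le {p : ℝ} (c : ℝ) (hp1 : 1 < p) (hp2 : p < 2)
    (hA : 0 ≤ A) (hγ : 0 < γ) (ht : t ≠ 0) :
    deriv (fun s => |deriv (barrierProfile A γ (p / (2 - p))) s| ^ (p - 2)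
        * deriv (barrierProfile A γ (p / (2 - p))) s
        + c * (s * barrierProfile A γ (p / (2 - p)) s)) t
      ≤ (2 * (p - 1) * (p / (2 - p)) ^ p * γ ^ (2 - p) + c) / (A + γ * |t| ^ (p / (2 - p)))
        - c * (p / (2 - p) * (γ * |t| ^ (p / (2 - p)))) / (A + γ * |t| ^ (p / (2 - p))) ^ 2 := by
  obtain ⟨D, hD, hle⟩ := exists_hasDerivAt_barrierProfile_flux_le hp1 hp2 hA hγ ht
  rw [(hD.fun_add ((hasDerivAt_mul_barrierProfile hA hγ ht).const_mul c)).deriv, add_div]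
  set S := A + γ * |t| ^ (p / (2 - p))
  set X := p / (2 - p) * (γ * |t| ^ (p / (2 - p)))
  linarith [show c * (1 / S - X / S ^ 2) = c / S - c * X / S ^ 2 by ring]

end barrierProfile

lemma pderiv'_update {N : ℕ} (i : Fin N) (u : (Fin N → ℝ) → ℝ) (y : Fin N → ℝ) (x : ℝ) :
    pderiv' N i u (update y i x) = deriv (fun t => u (update y i t)) x := by
  rw [pderiv', update_self]
  simp only [update_idem]

lemma inv_sum_mul_abs_rpow_update_eq_barrierProfile {N : ℕ} (γ r : Fin N → ℝ)
    (y : Fin N → ℝ) (i : Fin N) (x : ℝ) :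
    (∑ j, γ j * |update y i x j| ^ r j)⁻¹
      = barrierProfile (∑ j ∈ univ.erase i, γ j * |y j| ^ r j) (γ i) (r i) x := by
  rw [barrierProfile, ← add_sum_erase _ _ (mem_univ i), update_self, add_comm]
  congr 2
  refine sum_congr rfl fun j hj => ?_
  rw [update_of_ne (ne_of_mem_erase hj)]

lemma pderiv'_barrier_operator_le {N : ℕ} (p γ : Fin N → ℝ) (c : ℝ)
    (F : (Fin N → ℝ) → ℝ) (hF : F = fun y => (∑ j, γ j * |y j| ^ (p j / (2 - p j)))⁻¹)
    {y : Fin N → ℝ} {i : Fin N} (hp1 : 1 < p i) (hp2 : p i < 2) (hγ : ∀ j, 0 < γ j)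
    (hy : y i ≠ 0) :
    pderiv' N i (fun z => |pderiv' N i F z| ^ (p i - 2) * pderiv' N i F z + c * (z i * F z))
        y ≤
      (2 * (p i - 1) * (p i / (2 - p i)) ^ p i * γ i ^ (2 - p i) + c)
          / ∑ j, γ j * |y j| ^ (p j / (2 - p j))
        - c * (p i / (2 - p i) * (γ i * |y i| ^ (p i / (2 - p i))))
          / (∑ j, γ j * |y j| ^ (p j / (2 - p j))) ^ 2 := by
  set A := ∑ j ∈ univ.erase i, γ j * |y j| ^ (p j / (2 - p j))
  have hA : 0 ≤ A := sum_nonneg fun j _ => mul_nonneg (hγ j).le (by positivity)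
  have hslice : ∀ x, F (update y i x) = barrierProfile A (γ i) (p i / (2 - p i)) x := by
    intro x
    rw [hF]
    exact inv_sum_mul_abs_rpow_update_eq_barrierProfile γ _ y i x
  have hsum : ∑ j, γ j * |y j| ^ (p j / (2 - p j)) = A + γ i * |y i| ^ (p i / (2 - p i)) :=
    (sum_erase_add _ _ (mem_univ i)).symm
  rw [pderiv', hsum]
  simp only [pderiv'_update, hslice, update_self]
  exact deriv_barrierProfile_operator_le c hp1 hp2 hA (hγ i) hy

lemma selfSimilar_alpha_pos {n pbar : ℝ} (hn : 0 < n) (hpc : 2 * n / (n + 1) < pbar) :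
    0 < n / (n * pbar - 2 * n + pbar) := by
  rw [div_lt_iff₀ (by linarith)] at hpc
  exact div_pos hn (by linarith)

lemma one_lt_selfSimilar_sigma_mul_div {n pbar p σ : ℝ} (hn : 0 < n) (hp0 : 0 < p)
    (hp2 : p < 2) (hpc : 2 * n / (n + 1) < pbar) (hσ : σ = (n + 1) * pbar / (n * p) - 1) :
    1 < σ * p / (2 - p) := by
  rw [div_lt_iff₀ (by linarith)] at hpc
  rw [lt_div_iff₀ (by linarith), hσ, sub_mul, div_mul_eq_mul_div, mul_div_mul_right _ _ hp0.ne',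
    lt_sub_iff_add_lt, lt_div_iff₀ hn]
  linarith

lemma sum_selfSimilar_sigma_eq_one {N : ℕ} (p σ : Fin N → ℝ) {pbar : ℝ} (hN : N ≠ 0)
    (hpbar0 : pbar ≠ 0) (hpbar : 1 / pbar = (1 / (N : ℝ)) * ∑ i, 1 / p i)
    (hσ : ∀ i, σ i = ((N : ℝ) + 1) * pbar / ((N : ℝ) * p i) - 1) :
    ∑ i, σ i = 1 := by
  have hsum : ∑ i, 1 / p i = N / pbar := by
    rw [eq_div_iff hpbar0]
    field_simp at hpbar
    linarith
  have hσ' : ∀ i, σ i = ((N : ℝ) + 1) * pbar / N * (1 / p i) - 1 := fun i => by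
    rw [hσ i, ← div_div, div_eq_mul_one_div _ (p i)]
  rw [sum_congr rfl fun i _ => hσ' i, sum_sub_distrib, ← mul_sum, hsum, sum_const, card_univ,
    Fintype.card_fin, nsmul_eq_mul, mul_one]
  field_simp
  ring

lemma two_mul_sub_one_mul_rpow_mul_rpow_le {p γ K : ℝ} (hp1 : 1 < p) (hp2 : p < 2)
    (hK : 0 ≤ K) (hγ0 : 0 ≤ γ)
    (hγ : γ ≤ (K * (1 / (2 * (p - 1))) * (p / (2 - p)) ^ (-p)) ^ (1 / (2 - p))) :
    2 * (p - 1) * (p / (2 - p)) ^ p * γ ^ (2 - p) ≤ K := by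
  have hq : 0 < p / (2 - p) := div_pos (by linarith) (by linarith)
  set L := K * (1 / (2 * (p - 1))) * (p / (2 - p)) ^ (-p) with hL
  have hbase : 0 ≤ L := by
    have := Real.rpow_nonneg hq.le (-p)
    have : 0 ≤ 1 / (2 * (p - 1)) := by rw [one_div_nonneg]; linarith
    positivity
  have hpow : γ ^ (2 - p) ≤ L :=
    calc γ ^ (2 - p) ≤ (L ^ (1 / (2 - p))) ^ (2 - p) := Real.rpow_le_rpow hγ0 hγ (by linarith)
      _ = L := by rw [← Real.rpow_mul hbase, one_div_mul_cancel (by linarith), Real.rpow_one]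
  calc 2 * (p - 1) * (p / (2 - p)) ^ p * γ ^ (2 - p) ≤ 2 * (p - 1) * (p / (2 - p)) ^ p * L := by
        gcongr
    _ = K := by
        rw [hL, Real.rpow_neg hq.le]
        field_simp [(Real.rpow_pos_of_pos hq p).ne', show p - 1 ≠ 0 by linarith]

lemma sum_div_sub_div_sq_nonpos {ι : Type*} [Fintype ι] {α m : ℝ} {B σ q w : ι → ℝ}
    (hα : 0 ≤ α) (hw : ∀ i, 0 ≤ w i) (hB : ∑ i, B i ≤ α * (m - 1)) (hσ : ∑ i, σ i = 1)
    (hm : ∀ i, m ≤ σ i * q i) :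
    ∑ i, ((B i + α * σ i) / ∑ j, w j - α * σ i * (q i * w i) / (∑ j, w j) ^ 2) ≤ 0 := by
  rcases (sum_nonneg fun j _ => hw j : 0 ≤ ∑ j, w j).eq_or_lt with hT | hT
  · simp [← hT]
  set T := ∑ j, w j
  have hdiff : ∑ i, (B i + α * σ i) / T ≤ α * m / T := by
    rw [← sum_div, sum_add_distrib, ← mul_sum, hσ]
    gcongr
    linarith
  have hdrift : α * m / T ≤ ∑ i, α * σ i * (q i * w i) / T ^ 2 := by
    rw [← sum_div, le_div_iff₀ (by positivity), div_mul_eq_mul_div, sq, ← mul_assoc,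
      mul_div_cancel_right₀ _ hT.ne', mul_sum]
    refine sum_le_sum fun i _ => ?_
    nlinarith [mul_le_mul_of_nonneg_left (hm i) hα, hw i]
  rw [sum_sub_distrib]
  linarith

theorem stmt8_general (N : ℕ) (p σ γ : Fin N → ℝ) (pbar α m : ℝ)
    (hp1 : ∀ i, 1 < p i) (hp2 : ∀ i, p i < 2)
    (hpbar : 1 / pbar = (1 / (N : ℝ)) * ∑ i, 1 / p i)
    (hpc : 2 * N / ((N : ℝ) + 1) < pbar)
    (hα : α = (N : ℝ) / ((N : ℝ) * pbar - 2 * N + pbar))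
    (hσ : ∀ i, σ i = ((N : ℝ) + 1) * pbar / ((N : ℝ) * p i) - 1)
    (hm_le : ∀ i, m ≤ σ i * p i / (2 - p i))
    (hm_mem : ∃ i, m = σ i * p i / (2 - p i))
    (hγpos : ∀ i, 0 < γ i)
    (hγ : ∀ i, γ i ≤
      ((α / N) * (m - 1) * (1 / (2 * (p i - 1))) * (p i / (2 - p i)) ^ (-(p i)))
        ^ (1 / (2 - p i)))
    (F : (Fin N → ℝ) → ℝ)
    (hF : F = fun y => (∑ i, γ i * |y i| ^ (p i / (2 - p i)))⁻¹) :
    ∀ y : Fin N → ℝ, (∀ i, y i ≠ 0) →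
      (∑ i, pderiv' N i
        (fun z => |pderiv' N i F z| ^ (p i - 2) * pderiv' N i F z + α * σ i * (z i * F z)) y)
        ≤ 0 := by
  obtain ⟨i₀, hm₀⟩ := hm_mem
  have hN : (0 : ℝ) < N := Nat.cast_pos.2 i₀.pos
  have hpbar0 : 0 < pbar := (div_nonneg (by positivity) (by positivity)).trans_lt hpc
  have hα0 : 0 < α := hα ▸ selfSimilar_alpha_pos hN hpc
  have hm1 : 1 < m :=
    hm₀ ▸ one_lt_selfSimilar_sigma_mul_div hN (by linarith [hp1 i₀]) (hp2 i₀) hpc (hσ i₀)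
  have hK : 0 ≤ α / N * (m - 1) := mul_nonneg (div_nonneg hα0.le hN.le) (by linarith)
  intro y hy
  refine (sum_le_sum fun i _ =>
    pderiv'_barrier_operator_le p γ (α * σ i) F hF (hp1 i) (hp2 i) hγpos (hy i)).trans ?_
  refine sum_div_sub_div_sq_nonpos hα0.le (fun i => mul_nonneg (hγpos i).le (by positivity)) ?_
    (sum_selfSimilar_sigma_eq_one p σ i₀.pos.ne' hpbar0.ne' hpbar hσ)
    (fun i => mul_div_assoc (σ i) (p i) _ ▸ hm_le i)
  calc _ ≤ ∑ _i : Fin N, α / N * (m - 1) := sum_le_sum fun i _ =>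
        two_mul_sub_one_mul_rpow_mul_rpow_le (hp1 i) (hp2 i) hK (hγpos i).le (hγ i)
    _ = α * (m - 1) := by
        rw [sum_const, card_univ, Fintype.card_fin, nsmul_eq_mul]
        field_simp

/-- The anisotropic upper barrier F̄(y) = (∑ᵢ γᵢ|yᵢ|^{pᵢ/(2−pᵢ)})⁻¹ is a classical
    supersolution of the stationary profile equation away from the coordinate hyperplanes. -/
theorem stmt8 (N : ℕ) (hN : 2 ≤ N) (p σ γ : Fin N → ℝ) (pbar α m : ℝ)
    (hp1 : ∀ i, 1 < p i) (hp2 : ∀ i, p i < 2)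
    (hpbar : 1 / pbar = (1 / (N : ℝ)) * ∑ i, 1 / p i)
    (hpc : 2 * N / ((N : ℝ) + 1) < pbar)
    (hα : α = (N : ℝ) / ((N : ℝ) * pbar - 2 * N + pbar))
    (hσ : ∀ i, σ i = ((N : ℝ) + 1) * pbar / ((N : ℝ) * p i) - 1)
    (hm_le : ∀ i, m ≤ σ i * p i / (2 - p i))
    (hm_mem : ∃ i, m = σ i * p i / (2 - p i))
    (hγpos : ∀ i, 0 < γ i)
    (hγ : ∀ i, γ i ≤
      ((α / N) * (m - 1) * (1 / (2 * (p i - 1))) * (p i / (2 - p i)) ^ (-(p i)))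
        ^ (1 / (2 - p i)))
    (F : (Fin N → ℝ) → ℝ)
    (hF : F = fun y => (∑ i, γ i * |y i| ^ (p i / (2 - p i)))⁻¹) :
    ∀ y : Fin N → ℝ, (∀ i, y i ≠ 0) →
      (∑ i, pderiv' N i
        (fun z => |pderiv' N i F z| ^ (p i - 2) * pderiv' N i F z + α * σ i * (z i * F z)) y)
        ≤ 0 :=
  stmt8_general N p σ γ pbar α m hp1 hp2 hpbar hpc hα hσ hm_le hm_mem hγpos hγ F hF
end

section
/- Let p > 1 and let a, b ∈ ℝ with |a| + |b| > 0 and p < 2. Then there is a constant C_p > 0 depending only on p such that ∫₀¹ |a+sb|^{p−2} ds ≤ C_p (max_{s∈[0,1]} |a+sb|)^{p−2}. -/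
open MeasureTheory intervalIntegral Set Real

private lemma absRpowInt {q : ℝ} (hq : -1 < q) (c d : ℝ) :
    IntervalIntegrable (fun t : ℝ => |t| ^ q) volume c d := by
  suffices H : ∀ e : ℝ, IntervalIntegrable (fun t : ℝ => |t| ^ q) volume 0 e from
    (H c).symm.trans (H d)
  have H0 : ∀ e : ℝ, 0 ≤ e → IntervalIntegrable (fun t : ℝ => |t| ^ q) volume 0 e := by
    intro e he
    have h1 := intervalIntegrable_rpow' hq (a := (0:ℝ)) (b := e)
    rw [intervalIntegrable_iff] at h1 ⊢
    refine h1.congr_fun ?_ measurableSet_uIoc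
    intro x hx
    rw [uIoc_of_le he] at hx
    show x ^ q = |x| ^ q
    rw [abs_of_pos hx.1]
  intro e
  rcases le_total 0 e with he | he
  · exact H0 e he
  · rw [IntervalIntegrable.iff_comp_neg]
    simp only [abs_neg, neg_zero]
    exact H0 (-e) (by linarith)

private lemma absRpowVal {q : ℝ} (hq : -1 < q) {d : ℝ} (hd : 0 ≤ d) :
    ∫ t in (0:ℝ)..d, |t| ^ q = d ^ (q + 1) / (q + 1) := by
  have h1 : (∫ t in (0:ℝ)..d, |t| ^ q) = ∫ t in (0:ℝ)..d, t ^ q := by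
    apply integral_congr
    intro x hx
    rw [uIcc_of_le hd] at hx
    simp only
    rw [abs_of_nonneg hx.1]
  rw [h1, integral_rpow (Or.inl hq), Real.zero_rpow (by linarith : q + 1 ≠ 0)]
  ring

private lemma absRpowBound {q : ℝ} (hq : -1 < q) (c d : ℝ) :
    |∫ t in c..d, |t| ^ q| ≤ (|c| ^ (q + 1) + |d| ^ (q + 1)) / (q + 1) := by
  have hq1 : (0:ℝ) < q + 1 := by linarith
  have habs : ∀ e : ℝ, |∫ t in (0:ℝ)..e, |t| ^ q| ≤ |e| ^ (q + 1) / (q + 1) := by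
    intro e
    rcases le_total 0 e with he | he
    · rw [absRpowVal hq he, abs_of_nonneg (div_nonneg (Real.rpow_nonneg he _) hq1.le),
        abs_of_nonneg he]
    · have h2 : (∫ x in (0:ℝ)..(-e), |x| ^ q) = ∫ x in e..(0:ℝ), |x| ^ q := by
        simpa [abs_neg] using integral_comp_neg (a := (0:ℝ)) (b := -e) (fun t : ℝ => |t| ^ q)
      have h3 : (∫ t in (0:ℝ)..e, |t| ^ q) = -∫ x in (0:ℝ)..(-e), |x| ^ q := by
        rw [h2, integral_symm]
      rw [h3, abs_neg, absRpowVal hq (by linarith : (0:ℝ) ≤ -e),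
        abs_of_nonneg (div_nonneg (Real.rpow_nonneg (by linarith) _) hq1.le),
        abs_of_nonpos he]
  have key : (∫ t in c..d, |t| ^ q)
      = (∫ t in (0:ℝ)..d, |t| ^ q) - ∫ t in (0:ℝ)..c, |t| ^ q :=
    (integral_interval_sub_left (absRpowInt hq 0 d) (absRpowInt hq 0 c)).symm
  rw [key]
  calc |(∫ t in (0:ℝ)..d, |t| ^ q) - ∫ t in (0:ℝ)..c, |t| ^ q|
      ≤ |∫ t in (0:ℝ)..d, |t| ^ q| + |∫ t in (0:ℝ)..c, |t| ^ q| := abs_sub _ _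
    _ ≤ |d| ^ (q + 1) / (q + 1) + |c| ^ (q + 1) / (q + 1) := add_le_add (habs d) (habs c)
    _ = (|c| ^ (q + 1) + |d| ^ (q + 1)) / (q + 1) := by ring

/-- Algebraic inequality: ∫₀¹|a+sb|^{p−2}ds ≤ C_p (max_{s∈[0,1]}|a+sb|)^{p−2} for 1<p<2. -/
theorem stmt11 (p : ℝ) (hp1 : 1 < p) (hp2 : p < 2) :
    ∃ C : ℝ, 0 < C ∧ ∀ a b : ℝ, 0 < |a| + |b| →
      (∫ s in (0:ℝ)..1, |a + s * b| ^ (p - 2)) ≤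
        C * (sSup ((fun s => |a + s * b|) '' Set.Icc (0:ℝ) 1)) ^ (p - 2) := by
  have hp0 : (0:ℝ) < p - 1 := by linarith
  have hq : (-1:ℝ) < p - 2 := by linarith
  have hC4 : (0:ℝ) < 4 / (p - 1) := by positivity
  refine ⟨2 + 4 / (p - 1), by linarith, ?_⟩
  intro a b hab
  set m : ℝ := max |a| |a + b| with hmdef
  have hm_mem0 : |a| ∈ (fun s => |a + s * b|) '' Icc (0:ℝ) 1 :=
    ⟨0, ⟨le_refl 0, zero_le_one⟩, by norm_num⟩
  have hm_mem1 : |a + b| ∈ (fun s => |a + s * b|) '' Icc (0:ℝ) 1 :=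
    ⟨1, ⟨zero_le_one, le_refl 1⟩, by norm_num⟩
  have hub : ∀ y ∈ (fun s => |a + s * b|) '' Icc (0:ℝ) 1, y ≤ m := by
    rintro y ⟨s, hs, rfl⟩
    have h1 : a + s * b = (1 - s) * a + s * (a + b) := by ring
    calc |a + s * b| = |(1 - s) * a + s * (a + b)| := by rw [h1]
      _ ≤ |(1 - s) * a| + |s * (a + b)| := abs_add_le _ _
      _ = (1 - s) * |a| + s * |a + b| := by
          rw [abs_mul, abs_mul, abs_of_nonneg (show (0:ℝ) ≤ 1 - s by linarith [hs.2]),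
            abs_of_nonneg hs.1]
      _ ≤ (1 - s) * m + s * m := by
          exact add_le_add (mul_le_mul_of_nonneg_left (le_max_left _ _) (by linarith [hs.2]))
            (mul_le_mul_of_nonneg_left (le_max_right _ _) hs.1)
      _ = m := by ring
  have hM : sSup ((fun s => |a + s * b|) '' Icc (0:ℝ) 1) = m := by
    apply le_antisymm
    · exact csSup_le ⟨|a|, hm_mem0⟩ hub
    · exact max_le (le_csSup ⟨m, fun y hy => hub y hy⟩ hm_mem0)
        (le_csSup ⟨m, fun y hy => hub y hy⟩ hm_mem1)
  have hm : 0 < m := by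
    rcases eq_or_ne a 0 with ha | ha
    · have hb : 0 < |b| := by
        have : |a| = 0 := by rw [ha]; simp
        linarith
      calc (0:ℝ) < |b| := hb
        _ = |a + b| := by rw [ha]; ring_nf
        _ ≤ m := le_max_right _ _
    · exact lt_of_lt_of_le (abs_pos.mpr ha) (le_max_left _ _)
  rw [hM]
  have hmq : 0 < m ^ (p - 2) := Real.rpow_pos_of_pos hm _
  by_cases hb2 : m / 2 ≤ |b|
  · -- case |b| large
    have hbne : b ≠ 0 := by
      intro h
      rw [h] at hb2
      simp only [abs_zero] at hb2
      linarith
    have hcomp : (∫ s in (0:ℝ)..1, |a + s * b| ^ (p - 2))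
        = b⁻¹ * ∫ t in a..(b + a), |t| ^ (p - 2) := by
      calc (∫ s in (0:ℝ)..1, |a + s * b| ^ (p - 2))
          = ∫ s in (0:ℝ)..1, (fun t => |t| ^ (p - 2)) (b * s + a) := by
            apply integral_congr
            intro s _
            simp only
            rw [show b * s + a = a + s * b from by ring]
        _ = b⁻¹ • ∫ t in (b * 0 + a)..(b * 1 + a), |t| ^ (p - 2) :=
            integral_comp_mul_add (fun t => |t| ^ (p - 2)) hbne a
        _ = b⁻¹ * ∫ t in a..(b + a), |t| ^ (p - 2) := by
            rw [mul_zero, zero_add, mul_one, smul_eq_mul]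
    have hbound : |∫ t in a..(b + a), |t| ^ (p - 2)|
        ≤ (|a| ^ (p - 1) + |b + a| ^ (p - 1)) / (p - 1) := by
      have := absRpowBound (q := p - 2) hq a (b + a)
      rwa [show p - 2 + 1 = p - 1 from by ring] at this
    have e1 : |a| ^ (p - 1) ≤ m ^ (p - 1) :=
      Real.rpow_le_rpow (abs_nonneg a) (le_max_left _ _) (by linarith)
    have e2 : |b + a| ^ (p - 1) ≤ m ^ (p - 1) :=
      Real.rpow_le_rpow (abs_nonneg _) (by rw [add_comm]; exact le_max_right _ _) (by linarith)
    have hm1 : m ^ (p - 1) = m ^ (p - 2) * m := by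
      rw [show p - 1 = (p - 2) + 1 from by ring, Real.rpow_add hm, Real.rpow_one]
    have hbpos : (0:ℝ) < |b| := lt_of_lt_of_le (by linarith) hb2
    calc (∫ s in (0:ℝ)..1, |a + s * b| ^ (p - 2))
        = b⁻¹ * ∫ t in a..(b + a), |t| ^ (p - 2) := hcomp
      _ ≤ |b⁻¹ * ∫ t in a..(b + a), |t| ^ (p - 2)| := le_abs_self _
      _ = |b|⁻¹ * |∫ t in a..(b + a), |t| ^ (p - 2)| := by rw [abs_mul, abs_inv]
      _ ≤ |b|⁻¹ * ((|a| ^ (p - 1) + |b + a| ^ (p - 1)) / (p - 1)) :=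
          mul_le_mul_of_nonneg_left hbound (inv_nonneg.mpr (abs_nonneg b))
      _ ≤ (m / 2)⁻¹ * ((m ^ (p - 1) + m ^ (p - 1)) / (p - 1)) := by
          apply mul_le_mul
          · exact inv_anti₀ (by linarith) hb2
          · apply div_le_div_of_nonneg_right ?_ hp0.le
            · exact add_le_add e1 e2
          · positivity
          · positivity
      _ = 4 / (p - 1) * m ^ (p - 2) := by
          rw [hm1]
          field_simp
          ring
      _ ≤ (2 + 4 / (p - 1)) * m ^ (p - 2) :=
          mul_le_mul_of_nonneg_right (by linarith) hmq.le
  · -- case |b| small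
    push_neg at hb2
    have hlow : ∀ s ∈ Icc (0:ℝ) 1, m / 2 ≤ |a + s * b| := by
      intro s hs
      rcases le_total |a + b| |a| with hcmp | hcmp
      · have hmeq : m = |a| := max_eq_left hcmp
        have h2 : |a| - |s * b| ≤ |a + s * b| := by
          have h := abs_sub_abs_le_abs_sub a (-(s * b))
          simpa [sub_neg_eq_add] using h
        have h3 : |s * b| ≤ |b| := by
          rw [abs_mul, abs_of_nonneg hs.1]
          nlinarith [abs_nonneg b, hs.1, hs.2]
        rw [hmeq] at hb2 ⊢
        linarith
      · have hmeq : m = |a + b| := max_eq_right hcmp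
        have h2 : |a + b| - |(1 - s) * b| ≤ |a + s * b| := by
          have h := abs_sub_abs_le_abs_sub (a + b) ((1 - s) * b)
          rwa [show a + b - (1 - s) * b = a + s * b from by ring] at h
        have h3 : |(1 - s) * b| ≤ |b| := by
          rw [abs_mul, abs_of_nonneg (show (0:ℝ) ≤ 1 - s by linarith [hs.2])]
          nlinarith [abs_nonneg b, hs.1, hs.2]
        rw [hmeq] at hb2 ⊢
        linarith
    have hcont : IntervalIntegrable (fun s => |a + s * b| ^ (p - 2)) volume 0 1 := by
      apply ContinuousOn.intervalIntegrable
      apply ContinuousOn.rpow_const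
      · exact (continuous_const.add (continuous_id.mul continuous_const)).abs.continuousOn
      · intro s hs
        rw [Set.uIcc_of_le zero_le_one] at hs
        left
        have := hlow s hs
        intro h0
        rw [h0] at this
        linarith
    have step1 : (∫ s in (0:ℝ)..1, |a + s * b| ^ (p - 2))
        ≤ ∫ _ in (0:ℝ)..1, (m / 2) ^ (p - 2) := by
      apply integral_mono_on zero_le_one hcont intervalIntegrable_const
      intro s hs
      exact Real.rpow_le_rpow_of_nonpos (by linarith) (hlow s hs) (by linarith)
    have h21 : (2:ℝ) ^ (-(p - 2)) ≤ 2 := by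
      calc (2:ℝ) ^ (-(p - 2)) ≤ (2:ℝ) ^ (1:ℝ) :=
            Real.rpow_le_rpow_of_exponent_le one_le_two (by linarith)
        _ = 2 := Real.rpow_one 2
    have hhalf : (m / 2) ^ (p - 2) = m ^ (p - 2) * 2 ^ (-(p - 2)) := by
      rw [Real.div_rpow hm.le (by norm_num : (0:ℝ) ≤ 2),
        Real.rpow_neg (by norm_num : (0:ℝ) ≤ 2), div_eq_mul_inv]
    calc (∫ s in (0:ℝ)..1, |a + s * b| ^ (p - 2))
        ≤ ∫ _ in (0:ℝ)..1, (m / 2) ^ (p - 2) := step1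
      _ = (m / 2) ^ (p - 2) := by simp
      _ = m ^ (p - 2) * 2 ^ (-(p - 2)) := hhalf
      _ ≤ m ^ (p - 2) * 2 := mul_le_mul_of_nonneg_left h21 hmq.le
      _ ≤ (2 + 4 / (p - 1)) * m ^ (p - 2) := by
          rw [mul_comm]
          exact mul_le_mul_of_nonneg_right (by linarith) hmq.le
end
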